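/- Let k, p ≥ 2, let q_p = k^p − k, and let τ ∈ 𝒯_Fl[k,p] be a type of length ℓ realized by flat sets of cardinality p. Let s be a variable word over the alphabet [k]^{q_p} of length n. Then the set {Φ_{p,τ}(s(𝐚)) : 𝐚 ∈ [k]^{q_p}} contains a flat subset F ⊆ [k]^{n·ℓ} of cardinality p and type τ. -/

import Mathlib

/-- The word representation `R_p(F)` of a flat set `F` of cardinality `p`:
order `F` lexicographically as `t₀ <lex … <lex t_{p−1}`; for each coordinate `i` form the
column `āᵢ = (a_{i,0},…,a_{i,p−1})`; output the letter `a ∈ [k]` (`Sum.inl`) if the column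
is constant with value `a`, and the column itself (`Sum.inr`, a letter of `𝓛_p`) otherwise. -/
def Rp (k p : ℕ) (hk : 0 < k) (hp : 0 < p) (F : Finset (List (Fin k))) :
    List (Fin k ⊕ (Fin p → Fin k)) :=
  (List.range ((F.sort (· ≤ ·)).headD []).length).map fun i =>
    let row : Fin p → Fin k := fun j => ((F.sort (· ≤ ·)).getD (j : ℕ) []).getD i ⟨0, hk⟩
    if ∀ j, row j = row ⟨0, hp⟩ then Sum.inl (row ⟨0, hp⟩) else Sum.inr row

/-- The type of a flat set `F` of cardinality `p`: the type of its word representation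
`R_p(F)` (erase the letters of `[k]`, collapse runs of equal letters of `𝓛_p`). -/
def flatType (k p : ℕ) (hk : 0 < k) (hp : 0 < p) (F : Finset (List (Fin k))) :
    List (Fin p → Fin k) :=
  ((Rp k p hk hp F).filterMap Sum.getRight?).destutter (· ≠ ·)

/-! Substitute for the variable of `s` the rows `a_r = (e i r)ᵢ` of the matrix whose columns
are the letters of `𝓛_p`. The `p` words `Φ_{p,τ}(s(a_r))` are then the rows of one word over
`[k] ∪ 𝓛_p`: in its `j`-th block the variable becomes the column `τ_j` and a constant letter
`v` becomes `v(i_j)`. Since every block contains the variable, the type of this word is `τ`.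
Lexicographic comparison of two rows ignores the constant columns and repeated columns, so
the rows are ordered exactly as the rows of `τ`, which are strictly increasing because `τ` is
realized by a flat set. Hence the rows form a flat set whose word representation is that
word. -/

namespace List

variable {α β γ : Type*}

section Destutter

variable [DecidableEq α]

theorem destutter'_replicate_append (a : α) (l : List α) :
    ∀ m, (replicate m a ++ l).destutter' (· ≠ ·) a = l.destutter' (· ≠ ·) a
  | 0 => rfl
  | m + 1 => by
    rw [replicate_succ, cons_append, destutter'_cons_neg _ (by simp)]
    exact destutter'_replicate_append a l m

theorem destutter'_flatten_map_replicate (N : ℕ) :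
    ∀ (l : List α) (a : α), (a :: l).IsChain (· ≠ ·) →
      ((l.map (replicate (N + 1))).flatten).destutter' (· ≠ ·) a = a :: l
  | [], _, _ => by simp
  | b :: l, a, h => by
    rw [map_cons, flatten_cons, replicate_succ, cons_append,
      destutter'_cons_pos _ (isChain_cons_cons.mp h).1, destutter'_replicate_append,
      destutter'_flatten_map_replicate N l b (isChain_cons_cons.mp h).2]

theorem destutter_flatten_map_replicate {N : ℕ} (hN : N ≠ 0) {l : List α}
    (h : l.IsChain (· ≠ ·)) : ((l.map (replicate N)).flatten).destutter (· ≠ ·) = l := by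
  obtain ⟨N, rfl⟩ := Nat.exists_eq_succ_of_ne_zero hN
  cases l with
  | nil => simp
  | cons a l =>
    rw [map_cons, flatten_cons, replicate_succ, cons_append, destutter_cons',
      destutter'_replicate_append, destutter'_flatten_map_replicate N l a h]

variable [LT β]

theorem map_lt_map_iff_destutter' (f g : α → β) :
    ∀ (l : List α) (a : α), (a :: l).map f < (a :: l).map g ↔
      (l.destutter' (· ≠ ·) a).map f < (l.destutter' (· ≠ ·) a).map g
  | [], _ => by rw [destutter'_nil]
  | b :: l, a => by
    by_cases hab : a = b
    · subst hab
      rw [destutter'_cons_neg _ (by simp), ← map_lt_map_iff_destutter' f g l a]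
      simp only [map_cons, cons_lt_cons_iff]
      tauto
    · have ih := map_lt_map_iff_destutter' f g l b
      rw [destutter'_cons_pos _ hab]
      simp only [map_cons, cons_lt_cons_iff] at ih ⊢
      rw [ih]

theorem map_lt_map_iff_destutter (f g : α → β) (l : List α) :
    l.map f < l.map g ↔
      (l.destutter (· ≠ ·)).map f < (l.destutter (· ≠ ·)).map g := by
  cases l with
  | nil => simp
  | cons a l => rw [destutter_cons']; exact map_lt_map_iff_destutter' f g l a

end Destutter

theorem map_elim_lt_map_elim_iff [LT α] [Std.Irrefl (· < · : α → α → Prop)]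
    (f g : γ → α) (w : List (α ⊕ γ)) :
    w.map (Sum.elim id f) < w.map (Sum.elim id g) ↔
      (w.filterMap Sum.getRight?).map f < (w.filterMap Sum.getRight?).map g := by
  induction w with
  | nil => simp
  | cons z w ih =>
    cases z <;> simp [cons_lt_cons_iff, filterMap_cons, ih]

end List

section Columns

variable {α ι : Type*}

-- A word over `α ⊕ (ι → α)` is read as a matrix with rows indexed by `ι`; a letter `inl a`
-- is the constant column `a`.
def letterRow (r : ι) : α ⊕ (ι → α) → α := Sum.elim id fun c => c r

def wordType [DecidableEq (ι → α)] (w : List (α ⊕ (ι → α))) : List (ι → α) :=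
  (w.filterMap Sum.getRight?).destutter (· ≠ ·)

def NonconstColumns (w : List (α ⊕ (ι → α))) : Prop :=
  ∀ c, Sum.inr c ∈ w → ¬ ∃ a, ∀ j, c j = a

theorem map_letterRow_lt_iff [DecidableEq (ι → α)] [LT α]
    [Std.Irrefl (· < · : α → α → Prop)] (w : List (α ⊕ (ι → α))) (r r' : ι) :
    w.map (letterRow r) < w.map (letterRow r') ↔
      (wordType w).map (· r) < (wordType w).map (· r') :=
  (List.map_elim_lt_map_elim_iff _ _ w).trans
    (List.map_lt_map_iff_destutter _ _ (w.filterMap Sum.getRight?))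

theorem strictMono_map_letterRow_iff [DecidableEq (ι → α)] [Preorder ι] [LinearOrder α]
    (w : List (α ⊕ (ι → α))) :
    StrictMono (fun r => w.map (letterRow r)) ↔ StrictMono (fun r => (wordType w).map (· r)) :=
  forall₂_congr fun _ _ => imp_congr_right fun _ => map_letterRow_lt_iff w _ _

theorem eq_of_letterRow_eq [Nonempty ι] {z z' : α ⊕ (ι → α)}
    (hz : ∀ c, z = Sum.inr c → ¬ ∃ a, ∀ j, c j = a)
    (hz' : ∀ c, z' = Sum.inr c → ¬ ∃ a, ∀ j, c j = a)
    (h : ∀ r, letterRow r z = letterRow r z') : z = z' := by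
  rcases z with a | c <;> rcases z' with a' | c' <;> simp only [letterRow, Sum.elim_inl,
    Sum.elim_inr, id] at h
  · exact congrArg _ (h (Classical.arbitrary ι))
  · exact (hz' c' rfl ⟨a, fun j => (h j).symm⟩).elim
  · exact (hz c rfl ⟨a', h⟩).elim
  · exact congrArg _ (funext h)

theorem NonconstColumns.eq_of_map_letterRow_eq [Nonempty ι] {w w' : List (α ⊕ (ι → α))}
    (hw : NonconstColumns w) (hw' : NonconstColumns w')
    (h : ∀ r, w.map (letterRow r) = w'.map (letterRow r)) : w = w' := by
  have hlen : w.length = w'.length := by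
    simpa using congrArg List.length (h (Classical.arbitrary ι))
  refine List.ext_getElem hlen fun i hi hi' => eq_of_letterRow_eq ?_ ?_ fun r => ?_
  · rintro c hc; exact hw c (hc ▸ List.getElem_mem hi)
  · rintro c hc; exact hw' c (hc ▸ List.getElem_mem hi')
  · simpa [List.getElem?_eq_getElem hi, List.getElem?_eq_getElem hi'] using
      congrArg (·[i]?) (h r)

end Columns

section FlatSets

variable {k p : ℕ} (hk : 0 < k) (hp : 0 < p)

theorem nonconstColumns_Rp (F : Finset (List (Fin k))) : NonconstColumns (Rp k p hk hp F) := by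
  rintro c hc ⟨a, hca⟩
  obtain ⟨i, -, hi⟩ := List.mem_map.1 hc
  dsimp only at hi
  split_ifs at hi with hconst
  cases hi
  exact hconst fun j => (hca j).trans (hca ⟨0, hp⟩).symm

theorem map_letterRow_Rp {F : Finset (List (Fin k))} (hcard : F.card = p) {m : ℕ}
    (hm : ∀ x ∈ F, x.length = m) (r : Fin p) :
    (Rp k p hk hp F).map (letterRow r) = (F.sort (· ≤ ·)).getD r [] := by
  have hlen : ∀ j : Fin p, ((F.sort (· ≤ ·)).getD j []).length = m := fun j => by
    have hj : (j : ℕ) < (F.sort (· ≤ ·)).length := by simp [hcard]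
    rw [List.getD_eq_getElem _ _ hj]
    exact hm _ ((Finset.mem_sort _).1 (List.getElem_mem hj))
  apply List.ext_getElem
  · rw [List.length_map, Rp, List.length_map, List.length_range, List.headD_eq_getD,
      hlen ⟨0, hp⟩, hlen r]
  · intro i _ hi
    simp only [Rp, List.map_map, List.getElem_map, List.getElem_range, Function.comp_apply]
    split_ifs with hconst
    · rw [letterRow, Sum.elim_inl, id, ← hconst r, List.getD_eq_getElem _ _ hi]
    · exact List.getD_eq_getElem _ _ hi

theorem strictMono_map_flatType {F : Finset (List (Fin k))} (hcard : F.card = p) {m : ℕ}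
    (hm : ∀ x ∈ F, x.length = m) :
    StrictMono fun r : Fin p => (flatType k p hk hp F).map (· r) := by
  refine (strictMono_map_letterRow_iff (Rp k p hk hp F)).1 fun r r' hrr' => ?_
  have hsort : (F.sort (· ≤ ·)).length = p := by simp [hcard]
  have hr : (r : ℕ) < (F.sort (· ≤ ·)).length := hsort ▸ r.isLt
  have hr' : (r' : ℕ) < (F.sort (· ≤ ·)).length := hsort ▸ r'.isLt
  simp only [map_letterRow_Rp hk hp hcard hm, List.getD_eq_getElem _ _ hr,
    List.getD_eq_getElem _ _ hr']
  exact List.pairwise_iff_getElem.1 (Finset.sortedLT_sort F).pairwise _ _ _ _ hrr'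

end FlatSets

section RowSet

variable {α : Type*} [LinearOrder α] {p : ℕ}

def rowSet (w : List (α ⊕ (Fin p → α))) : Finset (List α) :=
  (List.ofFn fun r => w.map (letterRow r)).toFinset

variable {w : List (α ⊕ (Fin p → α))}

theorem sort_rowSet (hw : StrictMono fun r => w.map (letterRow r)) :
    (rowSet w).sort (· ≤ ·) = List.ofFn fun r => w.map (letterRow r) :=
  (List.toFinset_sort _ (List.nodup_ofFn.2 hw.injective)).2
    (List.pairwise_ofFn.2 fun _ _ h => (hw h).le)

theorem card_rowSet (hw : StrictMono fun r => w.map (letterRow r)) : (rowSet w).card = p := by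
  rw [rowSet, List.toFinset_card_of_nodup (List.nodup_ofFn.2 hw.injective), List.length_ofFn]

theorem length_of_mem_rowSet {x : List α} (hx : x ∈ rowSet w) : x.length = w.length := by
  obtain ⟨r, rfl⟩ := List.mem_ofFn.1 (List.mem_toFinset.1 hx)
  exact List.length_map _

theorem Rp_rowSet {k : ℕ} (hk : 0 < k) (hp : 0 < p) {w : List (Fin k ⊕ (Fin p → Fin k))}
    (hw : NonconstColumns w) (hmono : StrictMono fun r => w.map (letterRow r)) :
    Rp k p hk hp (rowSet w) = w := by
  have : Nonempty (Fin p) := ⟨⟨0, hp⟩⟩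
  refine (nonconstColumns_Rp hk hp _).eq_of_map_letterRow_eq hw fun r => ?_
  rw [map_letterRow_Rp hk hp (card_rowSet hmono) (fun _ => length_of_mem_rowSet),
    sort_rowSet hmono, List.getD_eq_getElem _ _ (by simp), List.getElem_ofFn]

end RowSet

section Substitution

variable {Q K ι : Type*}

def substColumn (s : List (Option (Q → K))) (q : Q) (c : ι → K) : List (K ⊕ (ι → K)) :=
  s.map fun o => o.elim (Sum.inr c) fun v => Sum.inl (v q)

theorem map_letterRow_substColumn (s : List (Option (Q → K))) {q : Q} {c : ι → K} {a : Q → K}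
    {r : ι} (ha : a q = c r) :
    (substColumn s q c).map (letterRow r) = (s.map fun o => o.getD a).map fun v => v q := by
  simp only [substColumn, List.map_map]
  refine List.map_congr_left fun o _ => ?_
  cases o <;> simp [letterRow, ha]

theorem filterMap_getRight?_substColumn (s : List (Option (Q → K))) (q : Q) (c : ι → K) :
    (substColumn s q c).filterMap Sum.getRight? = List.replicate (s.countP (·.isNone)) c := by
  induction s with
  | nil => rfl
  | cons o s ih =>
    cases o <;> simp [substColumn, List.filterMap_cons, List.replicate_succ, ← ih]

def substWord (s : List (Option (Q → K))) (τ : List (ι → K)) (idx : Fin τ.length → Q) :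
    List (K ⊕ (ι → K)) :=
  (List.ofFn fun j => substColumn s (idx j) (τ.get j)).flatten

variable {s : List (Option (Q → K))} {τ : List (ι → K)} {idx : Fin τ.length → Q}

theorem length_substWord : (substWord s τ idx).length = τ.length * s.length := by
  simp [substWord, substColumn, List.length_flatten, Function.comp_def, List.sum_replicate]

theorem map_letterRow_substWord {a : Q → K} {r : ι} (ha : ∀ j, a (idx j) = τ.get j r) :
    (substWord s τ idx).map (letterRow r) =
      (List.ofFn fun j => (s.map fun o => o.getD a).map fun v => v (idx j)).flatten := by
  simp only [substWord, List.map_flatten, List.map_ofFn]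
  exact congrArg _ (congrArg _ (funext fun j => map_letterRow_substColumn s (ha j)))

theorem wordType_substWord [DecidableEq (ι → K)] (hvar : none ∈ s)
    (hτ : τ.IsChain (· ≠ ·)) : wordType (substWord s τ idx) = τ := by
  have hN : s.countP (·.isNone) ≠ 0 :=
    (List.countP_pos_iff.2 ⟨none, hvar, rfl⟩).ne'
  rw [wordType, substWord, List.filterMap_flatten, List.map_ofFn]
  simp only [Function.comp_def, filterMap_getRight?_substColumn]
  have hτ_ofFn : (List.ofFn fun j => List.replicate (s.countP (·.isNone)) (τ.get j)) =
      τ.map (List.replicate (s.countP (·.isNone))) := by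
    conv_rhs => rw [← List.ofFn_get τ, List.map_ofFn]
    rfl
  rw [hτ_ofFn]
  exact List.destutter_flatten_map_replicate hN hτ

theorem nonconstColumns_substWord (hτ : ∀ l ∈ τ, ¬ ∃ a : K, ∀ j, l j = a) :
    NonconstColumns (substWord s τ idx) := by
  intro c hc
  obtain ⟨l, hl, hc⟩ := List.mem_flatten.1 hc
  obtain ⟨j, rfl⟩ := List.mem_ofFn.1 hl
  obtain ⟨o, -, ho⟩ := List.mem_map.1 hc
  cases o with
  | none => cases ho; exact hτ _ (List.get_mem τ j)
  | some v => cases ho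

end Substitution

/-- Let `k, p ≥ 2`, `q_p = k^p − k`, and let `τ ∈ 𝒯_Fl[k,p]` be a type
of length `ℓ` realized by some flat set of cardinality `p`. Let `e` enumerate the alphabet
`𝓛_p` (the nonconstant elements of `[k]^p`) and let `idx` give the positions of the
letters of `τ` in this enumeration. If `s` is a variable word over `[k]^{q_p}` of length
`n`, then the set `{Φ_{p,τ}(s(𝐚)) : 𝐚 ∈ [k]^{q_p}}` — where
`Φ_{p,τ}(t) = t̄_{i₀}⌢…⌢t̄_{i_{ℓ−1}}` concatenates the coordinate rows of `t` selected by
`τ` — contains a flat set `F ⊆ [k]^{n·ℓ}` of cardinality `p` and type `τ`. -/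
theorem stmt_17 (k p n : ℕ) (hk : 2 ≤ k) (hp : 2 ≤ p)
    (τ : List (Fin p → Fin k)) (hchain : τ.Chain' (· ≠ ·))
    (hletters : ∀ l ∈ τ, ¬ ∃ a : Fin k, ∀ j, l j = a)
    (hreal : ∃ F : Finset (List (Fin k)),
      (F.card = p ∧ ∃ m, ∀ x ∈ F, x.length = m) ∧
      flatType k p (by omega) (by omega) F = τ)
    (e : Fin (k ^ p - k) → (Fin p → Fin k))
    (idx : Fin τ.length → Fin (k ^ p - k)) (hidx : ∀ j, e (idx j) = τ.get j)
    (s : List (Option (Fin (k ^ p - k) → Fin k))) (hvar : none ∈ s)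
    (hslen : s.length = n) :
    ∃ F : Finset (List (Fin k)),
      F.card = p ∧ (∀ x ∈ F, x.length = n * τ.length) ∧
      flatType k p (by omega) (by omega) F = τ ∧
      ↑F ⊆ {x : List (Fin k) | ∃ a : Fin (k ^ p - k) → Fin k,
        x = (List.ofFn fun j : Fin τ.length =>
          (s.map fun o => o.getD a).map fun v => v (idx j)).flatten} := by
  obtain ⟨F, ⟨hcard, m, hm⟩, hF⟩ := hreal
  have hτ : StrictMono fun r : Fin p => τ.map (· r) := by
    rw [← hF]
    exact strictMono_map_flatType _ _ hcard hm
  have hw_type : wordType (substWord s τ idx) = τ := wordType_substWord hvar hchain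
  have hw_rows : StrictMono fun r => (substWord s τ idx).map (letterRow r) :=
    (strictMono_map_letterRow_iff _).2 (by rwa [hw_type])
  refine ⟨rowSet (substWord s τ idx), card_rowSet hw_rows, fun x hx => ?_, ?_, fun x hx => ?_⟩
  · rw [length_of_mem_rowSet hx, length_substWord, hslen, Nat.mul_comm]
  · exact (congrArg wordType (Rp_rowSet _ _ (nonconstColumns_substWord hletters) hw_rows)).trans
      hw_type
  · obtain ⟨r, rfl⟩ := List.mem_ofFn.1 (List.mem_toFinset.1 hx)
    exact ⟨fun i => e i r, map_letterRow_substWord fun j => congrFun (hidx j) r⟩
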